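/- Let P' = {p, q, r, e} be the four-element projection algebra whose operations are: θ_p is the constant map with value p, θ_q is the constant map with value q, θ_r is the constant map with value r, and θ_e is given by pθ_e = p, qθ_e = q, rθ_e = q, eθ_e = e. (These operations satisfy the projection algebra axioms (P1)–(P5).) Then the quotient of the free semigroup on X_{P'} = {x_s : s ∈ P'} by the congruence generated by the relations x_s² = x_s, (x_s x_t)² = x_s x_t, and x_s x_t x_s = x_{tθ_s} for all s, t ∈ P' has exactly 10 elements. -/

import Mathlib

structure ProjectionAlgebra (P : Type*) where
  th : P → P → P
  P1 : ∀ p, th p p = p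
  P2 : ∀ p q, th p (th p q) = th p q
  P3 : ∀ p q, th p (th q p) = th p q
  P4 : ∀ p q r, th p (th q (th p r)) = th (th p q) r
  P5 : ∀ p q r, th q (th p (th q (th p r))) = th q (th p r)

namespace ProjectionAlgebra

variable {P : Type*} (A : ProjectionAlgebra P)

/-- `p ≤ q` iff `p = pθ_q`. -/
def le (p q : P) : Prop := p = A.th q p

/-- `p ≤F q` iff `p = qθ_p`. -/
def leF (p q : P) : Prop := p = A.th p q

/-- `p F q` iff `p ≤F q` and `q ≤F p`. -/
def Frel (p q : P) : Prop := A.leF p q ∧ A.leF q p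

/-- `(e, f)` is a `p`-linked pair: `f = eθ_pθ_f` and `e = fθ_pθ_e`. -/
def Linked (p e f : P) : Prop :=
  f = A.th f (A.th p e) ∧ e = A.th e (A.th p f)

/-- `q θ_{p₁} ⋯ θ_{p_k}` for the list `ps = [p₁, …, p_k]`. -/
def applyList (q : P) (ps : List P) : P := ps.foldl (fun x p => A.th p x) q

end ProjectionAlgebra

/-- The defining relations of the free projection-generated regular *-semigroup
`PG(P)`: `x_p² = x_p`, `(x_p x_q)² = x_p x_q`, and `x_p x_q x_p = x_{qθ_p}`,
for `p, q ∈ P`, as a binary relation on the free semigroup over `P`. -/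
def PGrel {P : Type*} (A : ProjectionAlgebra P) :
    FreeSemigroup P → FreeSemigroup P → Prop := fun u v =>
  (∃ p : P, u = FreeSemigroup.of p * FreeSemigroup.of p ∧ v = FreeSemigroup.of p) ∨
  (∃ p q : P, u = (FreeSemigroup.of p * FreeSemigroup.of q) *
      (FreeSemigroup.of p * FreeSemigroup.of q) ∧
    v = FreeSemigroup.of p * FreeSemigroup.of q) ∨
  (∃ p q : P, u = FreeSemigroup.of p * FreeSemigroup.of q * FreeSemigroup.of p ∧
    v = FreeSemigroup.of (A.th p q))

/-- The word `x_h x_{t₁} ⋯ x_{t_m}` in the free semigroup. -/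
def word1 {P : Type*} (h : P) (t : List P) : FreeSemigroup P :=
  t.foldl (fun w p => w * FreeSemigroup.of p) (FreeSemigroup.of h)

/-- The reversed word `x_{t_m} ⋯ x_{t₁} x_h` in the free semigroup. -/
def word1r {P : Type*} (h : P) (t : List P) : FreeSemigroup P :=
  t.foldl (fun w p => FreeSemigroup.of p * w) (FreeSemigroup.of h)

/-- The four-element carrier `{p, q, r, e}` of Kinyon's projection algebra. -/
inductive K : Type
  | p | q | r | e
deriving DecidableEq

instance : Fintype K :=
  ⟨⟨↑[K.p, K.q, K.r, K.e], by decide⟩, fun x => by cases x <;> decide⟩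

/-- The operations of Kinyon's projection algebra: `kth s t = tθ_s`, where `θ_p, θ_q,
θ_r` are the constant maps with values `p, q, r`, and `pθ_e = p`, `qθ_e = q`,
`rθ_e = q`, `eθ_e = e`. -/
def kth : K → K → K
  | K.p, _ => K.p
  | K.q, _ => K.q
  | K.r, _ => K.r
  | K.e, K.p => K.p
  | K.e, K.q => K.q
  | K.e, K.r => K.q
  | K.e, K.e => K.e

/-- These operations satisfy the projection algebra axioms (P1)–(P5). -/
def KinyonAlgebra : ProjectionAlgebra K where
  th := kth
  P1 := by decide
  P2 := by decide
  P3 := by decide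
  P4 := by decide
  P5 := by decide

/-!
The θ-operations give a two-sided action of `PG(P)` on `P`: the word `x_{s₁} ⋯ x_{sₖ}` acts by
`θ_{s₁} ∘ ⋯ ∘ θ_{sₖ}` and by `θ_{sₖ} ∘ ⋯ ∘ θ_{s₁}`, and (P2), (P5), (P4) are exactly the relations.
In `P'` the maps `θ_p, θ_q, θ_r` are constant, so this action tells apart `x_e` and the nine
products `x_a x_b` with `a, b ∈ {p, q, r}`.

Conversely these ten elements exhaust the quotient: `x_e x_a = x_{aθ_e} x_a` and
`x_a x_e = x_a x_{aθ_e}` hold in any `PG(P)`, and `x_p, x_q, x_r` generate a rectangular band, because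
`x_q = x_e x_r x_e`, `x_p x_e = x_e x_p = x_p` and `x_r x_s x_r = x_r`.
-/

namespace ProjectionAlgebra

variable {P : Type*} (A : ProjectionAlgebra P)

abbrev PG : Type _ := (conGen (PGrel A)).Quotient

def gen (s : P) : A.PG := (FreeSemigroup.of s : FreeSemigroup P)

def thetaRep : FreeSemigroup P →ₙ* Function.End P × (Function.End P)ᵐᵒᵖ :=
  FreeSemigroup.lift fun s => (A.th s, MulOpposite.op (A.th s))

variable {A}

theorem conGen_PGrel_le_ker_thetaRep : conGen (PGrel A) ≤ Con.ker A.thetaRep := by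
  refine Con.conGen_le.mpr ?_
  rintro u v (⟨s, rfl, rfl⟩ | ⟨s, t, rfl, rfl⟩ | ⟨s, t, rfl, rfl⟩) <;>
    simp only [Con.ker_rel, map_mul, thetaRep, FreeSemigroup.lift_of] <;>
    refine Prod.ext ?_ (MulOpposite.unop_injective ?_) <;> funext u
  · exact A.P2 s u
  · exact A.P2 s u
  · exact A.P5 t s u
  · exact A.P5 s t u
  · exact A.P4 s t u
  · exact A.P4 s t u

variable (A) in
def thetaHom : A.PG →ₙ* Function.End P × (Function.End P)ᵐᵒᵖ where
  toFun w := Con.liftOn w A.thetaRep fun _ _ h => conGen_PGrel_le_ker_thetaRep h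
  map_mul' w v := Con.induction_on₂ w v fun u v => map_mul A.thetaRep u v

theorem thetaHom_gen (s : P) : A.thetaHom (A.gen s) = (A.th s, MulOpposite.op (A.th s)) := rfl

theorem gen_mul_self (s : P) : A.gen s * A.gen s = A.gen s :=
  (Con.eq _).mpr <| ConGen.Rel.of _ _ <| Or.inl ⟨s, rfl, rfl⟩

theorem gen_mul_gen_mul_self (s t : P) :
    A.gen s * A.gen t * (A.gen s * A.gen t) = A.gen s * A.gen t :=
  (Con.eq _).mpr <| ConGen.Rel.of _ _ <| Or.inr <| Or.inl ⟨s, t, rfl, rfl⟩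

theorem gen_mul_gen_mul_gen (s t : P) : A.gen s * A.gen t * A.gen s = A.gen (A.th s t) :=
  (Con.eq _).mpr <| ConGen.Rel.of _ _ <| Or.inr <| Or.inr ⟨s, t, rfl, rfl⟩

theorem gen_mul_gen_eq_gen_th_mul (s t : P) : A.gen s * A.gen t = A.gen (A.th s t) * A.gen t := by
  conv_lhs => rw [← gen_mul_gen_mul_self]
  rw [← gen_mul_gen_mul_gen, mul_assoc (A.gen s * A.gen t)]

theorem gen_mul_gen_eq_mul_gen_th (s t : P) : A.gen s * A.gen t = A.gen s * A.gen (A.th t s) := by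
  conv_lhs => rw [← gen_mul_gen_mul_self]
  rw [← gen_mul_gen_mul_gen, mul_assoc, mul_assoc]

theorem gen_mul_gen_of_le {s t : P} (h : A.le s t) : A.gen s * A.gen t = A.gen s := by
  rw [gen_mul_gen_eq_mul_gen_th, ← h, gen_mul_self]

theorem gen_mul_gen_of_le' {s t : P} (h : A.le s t) : A.gen t * A.gen s = A.gen s := by
  rw [gen_mul_gen_eq_gen_th_mul, ← h, gen_mul_self]

theorem PG.induction_on {C : A.PG → Prop} (w : A.PG) (gen : ∀ s, C (A.gen s))
    (gen_mul : ∀ s w, C w → C (A.gen s * w)) : C w :=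
  Con.induction_on w fun u => FreeSemigroup.recOnMul u gen fun s _ _ h => gen_mul s _ h

end ProjectionAlgebra

namespace KinyonAlgebra

open ProjectionAlgebra

local notation "x" => KinyonAlgebra.gen

theorem th_of_ne_e {a : K} (ha : a ≠ .e) (t : K) : KinyonAlgebra.th a t = a := by
  cases a <;> first | rfl | exact absurd rfl ha

theorem th_e_ne_e {a : K} (ha : a ≠ .e) : KinyonAlgebra.th .e a ≠ .e := by
  cases a <;> first | exact absurd rfl ha | decide

theorem p_le_e : KinyonAlgebra.le .p .e := rfl

theorem gen_mul_gen_mul_gen_of_ne_e {a b c : K} (ha : a ≠ .e) (hb : b ≠ .e) (hc : c ≠ .e) :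
    x a * x c * x b = x a * x b := by
  obtain rfl | hac := eq_or_ne a c
  · rw [gen_mul_self]
  obtain rfl | hcb := eq_or_ne c b
  · rw [mul_assoc, gen_mul_self]
  obtain rfl | hab := eq_or_ne a b
  · rw [gen_mul_gen_mul_gen, th_of_ne_e ha, gen_mul_self]
  have hq : x .q = x .e * (x .r * x .e) := by rw [← mul_assoc, gen_mul_gen_mul_gen]; rfl
  have hpe (y) : x .p * (x .e * y) = x .p * y := by rw [← mul_assoc, gen_mul_gen_of_le p_le_e]
  have hep : x .e * x .p = x .p := gen_mul_gen_of_le' p_le_e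
  have hrsr (s) : x .r * (x s * x .r) = x .r := by rw [← mul_assoc, gen_mul_gen_mul_gen]; rfl
  have hrsr' (s y) : x .r * (x s * (x .r * y)) = x .r * y := by
    rw [← mul_assoc (x s), ← mul_assoc, hrsr]
  cases a <;> cases b <;> cases c <;>
    first | contradiction | simp only [hq, mul_assoc, hpe, hep, hrsr, hrsr']

/-- `some (a, a)` stands for `x a = x a * x a`. -/
def normalForm : Option ({a : K // a ≠ .e} × {a : K // a ≠ .e}) → KinyonAlgebra.PG
  | none => x .e
  | some (a, b) => x a * x b

theorem normalForm_surjective : Function.Surjective normalForm := by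
  intro w
  induction w using PG.induction_on with
  | gen s =>
    by_cases hs : s = .e
    · exact ⟨none, by subst hs; rfl⟩
    · exact ⟨some (⟨s, hs⟩, ⟨s, hs⟩), gen_mul_self s⟩
  | gen_mul s w ih =>
    obtain ⟨i, rfl⟩ := ih
    by_cases hs : s = .e
    · subst hs
      rcases i with _ | ⟨⟨a, ha⟩, ⟨b, hb⟩⟩
      · exact ⟨none, (gen_mul_self _).symm⟩
      · refine ⟨some (⟨_, th_e_ne_e ha⟩, ⟨b, hb⟩), ?_⟩
        show x (KinyonAlgebra.th .e a) * x b = x .e * (x a * x b)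
        rw [← mul_assoc, gen_mul_gen_eq_gen_th_mul .e a,
          gen_mul_gen_mul_gen_of_ne_e (th_e_ne_e ha) hb ha]
    · rcases i with _ | ⟨⟨a, ha⟩, ⟨b, hb⟩⟩
      · exact ⟨some (⟨s, hs⟩, ⟨_, th_e_ne_e hs⟩), (gen_mul_gen_eq_mul_gen_th s .e).symm⟩
      · exact ⟨some (⟨s, hs⟩, ⟨b, hb⟩), by
          show x s * x b = x s * (x a * x b)
          rw [← mul_assoc, gen_mul_gen_mul_gen_of_ne_e hs hb ha]⟩

/-- Reads off `(a, b)` from `x a * x b` when `a, b ≠ e`, as `θ_a` and `θ_b` are then constant. -/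
def ends (w : KinyonAlgebra.PG) : K × K :=
  ((thetaHom KinyonAlgebra w).1 .e, (thetaHom KinyonAlgebra w).2.unop .e)

theorem ends_normalForm_none : ends (normalForm none) = (.e, .e) := rfl

theorem ends_normalForm (a b : {a : K // a ≠ .e}) : ends (normalForm (some (a, b))) = (a.1, b.1) :=
  Prod.ext (th_of_ne_e a.2 _) (th_of_ne_e b.2 _)

theorem normalForm_injective : Function.Injective normalForm := by
  rintro (_ | ⟨a, b⟩) (_ | ⟨c, d⟩) h <;> have h := congrArg ends h <;>
    simp only [ends_normalForm, ends_normalForm_none, Prod.mk.injEq] at h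
  · rfl
  · exact absurd h.1.symm c.2
  · exact absurd h.1 a.2
  · rw [Subtype.ext h.1, Subtype.ext h.2]

end KinyonAlgebra

/-- The quotient of the free semigroup on `X_{P'} = {x_s : s ∈ P'}` by
the congruence generated by `x_s² = x_s`, `(x_s x_t)² = x_s x_t`,
`x_s x_t x_s = x_{tθ_s}`, where `P'` is Kinyon's four-element projection algebra,
has exactly 10 elements. -/
theorem stmt17 : Nat.card (conGen (PGrel KinyonAlgebra)).Quotient = 10 := by
  rw [← Nat.card_congr (Equiv.ofBijective _ ⟨KinyonAlgebra.normalForm_injective,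
    KinyonAlgebra.normalForm_surjective⟩), Nat.card_eq_fintype_card]
  rfl
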